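/- (Positive topological entropy) Let f : ℝ × ℝ → ℝ be continuous and 1-periodic in the time variable, and suppose the equation x' = f(t,x) admits a solution x with x(t+2) = x(t) for all t ∈ ℝ and x(t₁+1) ≠ x(t₁) for some t₁ ∈ ℝ. Then there exists a compact subset W of C(ℝ,ℝ), consisting of solutions of x' = f(t,x) and invariant under the time-one shift ψ₁, such that the topological entropy of the restriction ψ₁|_W : W → W equals log 2. -/

import Mathlib

/-- `x` is a (classical) solution of the ODE `x' = f(t,x)` on the whole real line. -/
def IsSolution (f : ℝ × ℝ → ℝ) (x : ℝ → ℝ) : Prop :=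
  ∀ t : ℝ, HasDerivAt x (f (t, x t)) t

/-- The time-one shift `ψ₁` on `C(ℝ, ℝ)`: `shiftOne w = w (· + 1)`. -/
def shiftOne (w : C(ℝ, ℝ)) : C(ℝ, ℝ) :=
  w.comp ⟨fun t => t + 1, by continuity⟩

/-!
Since `x` is `2`-periodic, `δ t = x (t + 1) - x t` is `1`-antiperiodic: it vanishes somewhere, hence
on a whole lattice `t₀ + ℤ`, and it vanishes nowhere on `t₁ + ℤ`. By periodicity of `f`, `x (· + 1)`
is a solution too, and it agrees with `x` on `t₀ + ℤ`; so for every `a : ℤ → Bool` we may switch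
between the two on each window `[t₀ + n, t₀ + n + 1)` and still get a solution. This is a continuous
injective map from the full shift on two symbols into `C(ℝ, ℝ)`, conjugating the shift to `ψ₁`.
Its image is compact, and the conjugacy preserves entropy because a compact space carries a unique
uniformity. Finally, the minimal `n`-dynamical covers of the full shift on `k` symbols at the window
`[-N, N]` are exactly the `k ^ (2N + n)` cylinders, so its entropy is `log k`.
-/

open Function Set Filter Topology Uniformity Dynamics SymbolicDynamics.FullShift

section FullShift

variable {G A : Type*}

def cylinderEntourage (W : Finset G) : SetRel (G → A) (G → A) :=
  {p | p.1 ∈ cylinder W p.2}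

lemma coverMincard_univ_eq_card_pow [Fintype A] [Nonempty A] {T : (G → A) → G → A}
    {U : SetRel (G → A) (G → A)} {n : ℕ} {W : Finset G}
    (h : dynEntourage T U n = cylinderEntourage W) :
    coverMincard T univ U n = (Fintype.card A ^ W.card : ℕ) := by
  classical
  let extend (p : W → A) (i : G) : A := if hi : i ∈ W then p ⟨i, hi⟩ else Classical.arbitrary A
  let restrict (b : G → A) (i : W) : A := b i
  have restrict_extend (p : W → A) : restrict (extend p) = p := funext fun i => dif_pos i.2
  apply le_antisymm
  · have hcover : IsDynCoverOf T univ U n (Finset.univ.image extend) := by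
      intro b _
      refine ⟨extend (restrict b), by simp, ?_⟩
      rw [h]
      intro i hi
      simp [extend, restrict, hi]
    refine hcover.coverMincard_le_card.trans ?_
    exact_mod_cast Finset.card_image_le.trans (by simp)
  · refine le_iInf₂ fun s hs => ?_
    have hsurj : SurjOn restrict s (Finset.univ : Finset (W → A)) := by
      intro p _
      obtain ⟨c, hc, hpc⟩ := hs (mem_univ (extend p))
      rw [h] at hpc
      refine ⟨c, hc, funext fun i => ?_⟩
      exact (hpc i i.2).symm.trans (congr_fun (restrict_extend p) i)
    exact_mod_cast (Finset.card_le_card_of_surjOn restrict hsurj).trans_eq' (by simp)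

lemma shift_one_iterate (k : ℕ) (a : ℤ → A) : (shift (1 : ℤ))^[k] a = shift (k : ℤ) a := by
  induction k with
  | zero => simp
  | succ k ih => rw [iterate_succ_apply', ih, ← shift_add, Nat.cast_succ]

lemma dynEntourage_shift_cylinderEntourage_Icc (N : ℕ) {n : ℕ} (hn : n ≠ 0) :
    dynEntourage (shift (1 : ℤ)) (cylinderEntourage (Finset.Icc (-N : ℤ) N)) n =
      (cylinderEntourage (Finset.Icc (-N : ℤ) (N + n - 1)) : SetRel (ℤ → A) _) := by
  ext ⟨a, b⟩
  simp only [mem_dynEntourage, shift_one_iterate, cylinderEntourage, mem_ofPred_eq, mem_cylinder,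
    Finset.mem_Icc, shift_apply]
  constructor
  · intro hab j hj
    by_cases hjN : j ≤ N
    · simpa using hab 0 (Nat.pos_of_ne_zero hn) j ⟨hj.1, hjN⟩
    · have := hab (j - N).toNat (by omega) N (by omega)
      rwa [Int.toNat_of_nonneg (by omega), sub_add_cancel] at this
  · intro hab k hk i hi
    exact hab (k + i) (by omega)

lemma hasBasis_uniformity_cylinderEntourage_Icc [UniformSpace A] [DiscreteUniformity A] :
    (𝓤 (ℤ → A)).HasBasis (fun _ : ℕ => True)
      fun N => cylinderEntourage (Finset.Icc (-N : ℤ) N) := by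
  have : 𝓤 (ℤ → A) = ⨅ i : ℤ, 𝓟 {p : (ℤ → A) × (ℤ → A) | p.1 i = p.2 i} := by
    simp only [Pi.uniformity, DiscreteUniformity.eq_principal_setRelId, comap_principal]
    rfl
  rw [this]
  refine (hasBasis_iInf_principal_finite _).to_hasBasis (fun t ht => ?_)
    fun N _ => ⟨_, (Finset.Icc _ _).finite_toSet, fun p hp i hi => mem_iInter₂.1 hp i hi⟩
  obtain ⟨l, hl⟩ := ht.bddBelow
  obtain ⟨u, hu⟩ := ht.bddAbove
  refine ⟨l.natAbs + u.natAbs, trivial, fun p hp => mem_iInter₂.2 fun i hi => hp i ?_⟩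
  have := hl hi
  have := hu hi
  simp only [Finset.mem_Icc]
  omega

lemma coverEntropyEntourage_shift_cylinderEntourage_Icc [Fintype A] [Nonempty A] (N : ℕ) :
    coverEntropyEntourage (shift (1 : ℤ)) univ
      (cylinderEntourage (Finset.Icc (-N : ℤ) N) : SetRel (ℤ → A) _) =
      ENNReal.log (Fintype.card A) := by
  have hcard {n : ℕ} (hn : n ≠ 0) : coverMincard (shift (1 : ℤ)) univ
      (cylinderEntourage (Finset.Icc (-N : ℤ) N) : SetRel (ℤ → A) _) n =
      (Fintype.card A ^ (2 * N + n) : ℕ) := by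
    rw [coverMincard_univ_eq_card_pow (dynEntourage_shift_cylinderEntourage_Icc N hn), Int.card_Icc]
    congr
    omega
  rw [coverEntropyEntourage, ← ExpGrowth.expGrowthSup_pow]
  apply le_antisymm
  · refine ExpGrowth.expGrowthSup_le_of_eventually_le (b := (Fintype.card A : ENNReal) ^ (2 * N))
      (by simp) ?_
    filter_upwards [eventually_ne_atTop 0] with n hn
    rw [hcard hn]
    push_cast
    rw [pow_add]
  · refine ExpGrowth.expGrowthSup_eventually_monotone ?_
    filter_upwards [eventually_ne_atTop 0] with n hn
    rw [hcard hn]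
    push_cast
    exact pow_le_pow_right₀ (by simp [Nat.one_le_iff_ne_zero, Fintype.card_ne_zero]) (by omega)

theorem coverEntropy_shift [UniformSpace A] [DiscreteUniformity A] [Fintype A] [Nonempty A] :
    coverEntropy (shift (1 : ℤ)) (univ : Set (ℤ → A)) = ENNReal.log (Fintype.card A) := by
  simp [coverEntropy_eq_iSup_basis hasBasis_uniformity_cylinderEntourage_Icc,
    coverEntropyEntourage_shift_cylinderEntourage_Icc]

end FullShift

theorem coverEntropy_image_of_isEmbedding {X Y : Type*} [UniformSpace X] [CompactSpace X]
    [UniformSpace Y] {S : X → X} {T : Y → Y} {φ : X → Y} (hφ : IsEmbedding φ)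
    (h : Semiconj φ S T) (F : Set X) : coverEntropy T (φ '' F) = coverEntropy S F := by
  rw [coverEntropy_image_of_comap _ h F]
  congr
  refine unique_uniformity_of_compact ?_ rfl
  rw [UniformSpace.toTopologicalSpace_comap]
  exact hφ.eq_induced.symm

theorem continuous_uncurry_of_eventually_eq {α β γ : Type*} [TopologicalSpace α]
    [TopologicalSpace β] [TopologicalSpace γ] {F : α → β → γ} (hF : ∀ a, Continuous (F a))
    (hloc : ∀ a b, ∀ᶠ p in 𝓝 (a, b), F p.1 p.2 = F a p.2) : Continuous (uncurry F) :=
  continuous_iff_continuousAt.2 fun ⟨a, b⟩ =>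
    ((hF a).comp continuous_snd).continuousAt.congr <| by
      filter_upwards [hloc a b] with p hp using hp.symm

theorem Function.Periodic.antiperiodic_sub {α β : Type*} [AddSemigroup α] [AddCommGroup β]
    {x : α → β} {c : α} (hx : Periodic x (c + c)) : Antiperiodic (fun t => x (t + c) - x t) c :=
  fun t => by simp only [add_assoc, hx t, neg_sub]

theorem Function.Antiperiodic.exists_eq_zero {g : ℝ → ℝ} {c : ℝ} (hg : Antiperiodic g c)
    (hcont : Continuous g) : ∃ t, g t = 0 := by
  have h0 : (0 : ℝ) ∈ uIcc (g 0) (g c) := by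
    rw [hg.eq, mem_uIcc]
    rcases le_total (g 0) 0 with h | h
    · exact .inl ⟨h, by linarith⟩
    · exact .inr ⟨by linarith, h⟩
  obtain ⟨t, -, ht⟩ := intermediate_value_uIcc hcont.continuousOn h0
  exact ⟨t, ht⟩

theorem Function.Antiperiodic.add_int_mul_eq_zero_iff {α β : Type*} [NonAssocRing α] [Ring β]
    [NoZeroDivisors β] [CharZero β] {g : α → β} {c : α} (hg : Antiperiodic g c) (t : α) (n : ℤ) :
    g (t + n * c) = 0 ↔ g t = 0 := by
  rw [hg.add_int_mul_eq]
  simp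

section PeriodTwo

variable {x : ℝ → ℝ}

lemma antiperiodic_sub_of_periodic_two (hx2 : Periodic x 2) :
    Antiperiodic (fun t => x (t + 1) - x t) 1 :=
  Periodic.antiperiodic_sub (by rwa [one_add_one_eq_two])

lemma exists_forall_int_add_eq (hx : Continuous x) (hx2 : Periodic x 2) :
    ∃ t₀, ∀ k : ℤ, x (t₀ + k) = x t₀ := by
  have hδ := antiperiodic_sub_of_periodic_two hx2
  obtain ⟨t₀, ht₀⟩ := hδ.exists_eq_zero (by fun_prop)
  have hstep : Periodic (fun k : ℤ => x (t₀ + k)) 1 := fun k => by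
    have := (hδ.add_int_mul_eq_zero_iff t₀ k).2 ht₀
    push_cast
    rw [mul_one, sub_eq_zero] at this
    rwa [← add_assoc]
  exact ⟨t₀, fun k => by simpa using hstep.int_mul k 0⟩

lemma add_int_add_one_ne (hx2 : Periodic x 2) {t₁ : ℝ} (ht₁ : x (t₁ + 1) ≠ x t₁) (m : ℤ) :
    x (t₁ + m + 1) ≠ x (t₁ + m) := by
  have := ((antiperiodic_sub_of_periodic_two hx2).add_int_mul_eq_zero_iff t₁ m).not.2
    (sub_ne_zero.2 ht₁)
  rwa [mul_one, sub_eq_zero] at this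

end PeriodTwo

section ODE

variable {f : ℝ × ℝ → ℝ} {x : ℝ → ℝ}

lemma IsSolution.continuous (hx : IsSolution f x) : Continuous x :=
  continuous_iff_continuousAt.2 fun t => (hx t).continuousAt

lemma IsSolution.comp_add_intCast (hper : ∀ t y : ℝ, f (t + 1, y) = f (t, y))
    (hx : IsSolution f x) (k : ℤ) : IsSolution f (fun t => x (t + k)) := by
  intro t
  have hk : f (t + k, x (t + k)) = f (t, x (t + k)) := by
    simpa using (show Periodic (fun s => f (s, x (t + k))) 1 from fun s => hper s _).int_mul k t
  simpa [hk] using (hx (t + k)).comp_add_const t k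

lemma IsSolution.glue {y : ℤ → ℝ → ℝ} (hy : ∀ n, IsSolution f (y n)) (t₀ : ℝ)
    (hmatch : ∀ n : ℤ, y (n - 1) (t₀ + n) = y n (t₀ + n)) :
    IsSolution f (fun t => y ⌊t - t₀⌋ t) := by
  set g := fun t => y ⌊t - t₀⌋ t
  have eqOn_Ico (n : ℤ) : EqOn g (y n) (Ico (t₀ + n) (t₀ + n + 1)) := fun s hs => by
    have : ⌊s - t₀⌋ = n := Int.floor_eq_iff.2 ⟨by linarith [hs.1], by linarith [hs.2]⟩
    simp only [g, this]
  have eqOn_Ioc (n : ℤ) : EqOn g (y (n - 1)) (Ioc (t₀ + n - 1) (t₀ + n)) := fun s hs => by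
    rcases hs.2.lt_or_eq with hlt | rfl
    · have : ⌊s - t₀⌋ = n - 1 :=
        Int.floor_eq_iff.2 ⟨by push_cast; linarith [hs.1], by push_cast; linarith⟩
      simp only [g, this]
    · simp only [g, add_sub_cancel_left, Int.floor_intCast, hmatch]
  intro t
  have hright : HasDerivWithinAt g (f (t, g t)) (Ici t) t := by
    have ht : t ∈ Ico (t₀ + ⌊t - t₀⌋) (t₀ + ⌊t - t₀⌋ + 1) :=
      ⟨by linarith [Int.floor_le (t - t₀)], by linarith [Int.lt_floor_add_one (t - t₀)]⟩
    rw [eqOn_Ico _ ht]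
    exact ((hy _ t).hasDerivWithinAt.congr_of_mem (eqOn_Ico _) ht).mono_of_mem_nhdsWithin
      (Ico_mem_nhdsGE_of_mem ht)
  have hleft : HasDerivWithinAt g (f (t, g t)) (Iic t) t := by
    have ht : t ∈ Ioc (t₀ + ⌈t - t₀⌉ - 1) (t₀ + ⌈t - t₀⌉) :=
      ⟨by linarith [Int.ceil_lt_add_one (t - t₀)], by linarith [Int.le_ceil (t - t₀)]⟩
    rw [eqOn_Ioc _ ht]
    exact ((hy _ t).hasDerivWithinAt.congr_of_mem (eqOn_Ioc _) ht).mono_of_mem_nhdsWithin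
      (Ioc_mem_nhdsLE_of_mem ht)
  simpa using hleft.union hright

/-- On `[t₀ + n, t₀ + n + 1)` follow `x (· + n + a n)`; for a `2`-periodic `x` this is `x` or its
translate by one, and the offset `n` makes the time-one shift act on `a` as the shift. -/
noncomputable def gluedSolution (x : ℝ → ℝ) (t₀ : ℝ) (a : ℤ → Bool) (t : ℝ) : ℝ :=
  x (t + (⌊t - t₀⌋ + (a ⌊t - t₀⌋).toNat : ℤ))

variable {t₀ : ℝ}

lemma isSolution_gluedSolution (hper : ∀ t y : ℝ, f (t + 1, y) = f (t, y)) (hx : IsSolution f x)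
    (ht₀ : ∀ k : ℤ, x (t₀ + k) = x t₀) (a : ℤ → Bool) : IsSolution f (gluedSolution x t₀ a) :=
  IsSolution.glue (y := fun n t => x (t + (n + (a n).toNat : ℤ)))
      (fun n => hx.comp_add_intCast hper _) t₀ fun n => by
    simp only [add_assoc, ← Int.cast_add, ht₀]

lemma gluedSolution_shift (hx2 : Periodic x 2) (a : ℤ → Bool) (t : ℝ) :
    gluedSolution x t₀ (shift 1 a) t = gluedSolution x t₀ a (t + 1) := by
  simp only [gluedSolution, shift_apply, show t + 1 - t₀ = t - t₀ + 1 by ring, Int.floor_add_one,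
    add_comm (1 : ℤ)]
  rw [← hx2]
  push_cast
  ring_nf

lemma eventually_gluedSolution_eq (a : ℤ → Bool) (t : ℝ) :
    ∀ᶠ p in 𝓝 (a, t), gluedSolution x t₀ p.1 p.2 = gluedSolution x t₀ a p.2 := by
  set n := ⌊t - t₀⌋
  have hcyl : cylinder (Finset.Icc (n - 1) n) a ∈ 𝓝 a :=
    (isOpen_cylinder _ a).mem_nhds fun _ _ => rfl
  have hwin : Ioo (t₀ + n - 1) (t₀ + n + 1) ∈ 𝓝 t :=
    Ioo_mem_nhds (by linarith [Int.floor_le (t - t₀)]) (by linarith [Int.lt_floor_add_one (t - t₀)])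
  filter_upwards [prod_mem_nhds hcyl hwin] with ⟨b, s⟩ ⟨hb, hs⟩
  have hfloor : ⌊s - t₀⌋ ∈ Finset.Icc (n - 1) n := by
    have h1 : n - 1 ≤ ⌊s - t₀⌋ := Int.le_floor.2 (by push_cast; linarith [hs.1])
    have h2 : ⌊s - t₀⌋ < n + 1 := Int.floor_lt.2 (by push_cast; linarith [hs.2])
    exact Finset.mem_Icc.2 ⟨h1, by omega⟩
  simp only [gluedSolution, show b ⌊s - t₀⌋ = a ⌊s - t₀⌋ from hb _ hfloor]

lemma gluedSolution_injective {t₁ : ℝ} (hsep : ∀ m : ℤ, x (t₁ + m + 1) ≠ x (t₁ + m)) :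
    Injective (gluedSolution x t₀) := by
  intro a b hab
  by_contra hne
  obtain ⟨n, hn⟩ := Function.ne_iff.1 hne
  set m := n - ⌊t₁ - t₀⌋
  have hfloor : ⌊t₁ + m - t₀⌋ = n := by
    rw [show t₁ + m - t₀ = t₁ - t₀ + m by ring, Int.floor_add_intCast]
    omega
  have hval := congr_fun hab (t₁ + m)
  have hne' := hsep (m + n)
  simp only [gluedSolution, hfloor] at hval
  push_cast at hval hne'
  cases ha : a n <;> cases hb : b n <;> simp_all [add_assoc]

end ODE

theorem positive_topological_entropy_general
    (f : ℝ × ℝ → ℝ)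
    (hper : ∀ t x : ℝ, f (t + 1, x) = f (t, x))
    (x : ℝ → ℝ) (hx : IsSolution f x)
    (hx2 : ∀ t : ℝ, x (t + 2) = x t)
    (t₁ : ℝ) (ht₁ : x (t₁ + 1) ≠ x t₁) :
    ∃ W : Set C(ℝ, ℝ), IsCompact W ∧
      (∀ w ∈ W, IsSolution f w) ∧
      shiftOne '' W = W ∧
      Dynamics.coverEntropy shiftOne W = (Real.log 2 : EReal) := by
  obtain ⟨t₀, ht₀⟩ := exists_forall_int_add_eq hx.continuous hx2
  have hsol := isSolution_gluedSolution hper hx ht₀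
  let φ : (ℤ → Bool) → C(ℝ, ℝ) := fun a => ⟨gluedSolution x t₀ a, (hsol a).continuous⟩
  have hφ : IsEmbedding φ := by
    refine (ContinuousMap.continuous_of_continuous_uncurry φ ?_).isClosedEmbedding ?_ |>.isEmbedding
    · exact continuous_uncurry_of_eventually_eq (fun a => (hsol a).continuous)
        eventually_gluedSolution_eq
    · exact fun a b hab => gluedSolution_injective (add_int_add_one_ne hx2 ht₁)
        (congrArg DFunLike.coe hab)
  have hsemi : Semiconj φ (shift 1) shiftOne := fun a =>
    ContinuousMap.ext (gluedSolution_shift hx2 a)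
  have hshift : Surjective (shift (1 : ℤ) : (ℤ → Bool) → ℤ → Bool) := fun a =>
    ⟨shift (-1) a, by rw [← shift_add, neg_add_cancel, shift_zero]⟩
  refine ⟨range φ, isCompact_range hφ.continuous, forall_mem_range.2 hsol, ?_, ?_⟩
  · rw [← image_univ, ← hsemi.set_image univ, image_univ_of_surjective hshift]
  · rw [← image_univ, coverEntropy_image_of_isEmbedding hφ hsemi, coverEntropy_shift,
      Fintype.card_bool, Nat.cast_ofNat, ← ENNReal.ofReal_ofNat, ENNReal.log_ofReal_of_pos two_pos]

theorem positive_topological_entropy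
    (f : ℝ × ℝ → ℝ) (hf : Continuous f)
    (hper : ∀ t x : ℝ, f (t + 1, x) = f (t, x))
    (x : ℝ → ℝ) (hx : IsSolution f x)
    (hx2 : ∀ t : ℝ, x (t + 2) = x t)
    (t₁ : ℝ) (ht₁ : x (t₁ + 1) ≠ x t₁) :
    ∃ W : Set C(ℝ, ℝ), IsCompact W ∧
      (∀ w ∈ W, IsSolution f w) ∧
      shiftOne '' W = W ∧
      Dynamics.coverEntropy shiftOne W = (Real.log 2 : EReal) :=
  positive_topological_entropy_general f hper x hx hx2 t₁ ht₁
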